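/- Let T be a positively edge-weighted phylogenetic X-tree with |X| = n, let 2 ≤ m ≤ n, let D be the m-subtree weight map of T, and let S_D(i,j) = Σ D({i,j} ∪ Y), the sum over all (m−2)-element subsets Y of X \ {i,j}, with S_D(i,i) = 0. Then S_D satisfies the four-point condition: for all i, j, k, l ∈ X, S_D(i,j) + S_D(k,l) ≤ max(S_D(i,k) + S_D(j,l), S_D(j,k) + S_D(i,l)). -/

import Mathlib

/-!
An edge `e` misses `[{i, j} ∪ Y]` exactly when `i`, `j` and `Y` all lie on one side `A` of `e`,
so for distinct leaves `S_D(i, j) = ∑ₑ w(e) (C(n-2, m-2) - [i, j on one side A] C(|A|-2, m-2))`.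
Splitting this as `φ(i) + φ(j) + d(i, j)` with `φ ≥ 0` exhibits `S_D` as the path metric of `T`
for the edge weights `w(e) (C(|A|-2, m-2) + C(|B|-2, m-2)) / 2`, with pendant edges of length
`φ(i)` attached at the leaves. Path metrics of trees satisfy the four-point condition: the split
metric `δ` of an edge satisfies `δ(i, j) + δ(k, l) ≤ δ(i, k) + δ(j, l)` unless the edge separates
`{i, k}` from `{j, l}`, and no two edges of a tree separate `{i, k}` from `{j, l}` and `{i, l}`
from `{j, k}` respectively.
-/

open SimpleGraph Finset

attribute [local instance] Classical.propDecidable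

noncomputable section

/-- `e` lies on some path (hence on the unique path, in a tree) from `a` to `b`. -/
def OnPath {V : Type*} (G : SimpleGraph V) (a b : V) (e : Sym2 V) : Prop :=
  ∃ p : G.Walk a b, p.IsPath ∧ e ∈ p.edges

/-- The edge set `[R]` of the smallest subtree of a tree `G` spanning `R`. -/
def subtreeEdges {V : Type*} [Fintype V] (G : SimpleGraph V) (R : Finset V) :
    Finset (Sym2 V) :=
  G.edgeFinset.filter fun e => ∃ a ∈ R, ∃ b ∈ R, OnPath G a b e

/-- The subtree weight `D(R) = ∑_{e ∈ [R]} w(e)`. -/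
def subtreeWeight {V : Type*} [Fintype V] (G : SimpleGraph V) (w : Sym2 V → ℝ)
    (R : Finset V) : ℝ :=
  ∑ e ∈ subtreeEdges G R, w e

/-- `L_i(e)`: the set of leaves in the component of `T - e` containing `i`. -/
def leafSide {V : Type*} [Fintype V] (G : SimpleGraph V) (X : Finset V)
    (i : V) (e : Sym2 V) : Finset V :=
  X.filter fun x => (G.deleteEdges {e}).Reachable i x

/-- `S_D(i,j) = ∑_{Y ∈ C(X \ {i,j}, m-2)} D({i,j} ∪ Y)`. -/
def SDmap {V : Type*} [Fintype V] (G : SimpleGraph V) (w : Sym2 V → ℝ)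
    (X : Finset V) (m : ℕ) (i j : V) : ℝ :=
  ∑ Y ∈ ((X.erase i).erase j).powersetCard (m - 2),
    subtreeWeight G w (insert i (insert j Y))

/-- Binomial coefficient with integer arguments, `0` whenever `b < 0` or `a < b`. -/
def C (a b : ℤ) : ℤ := if 0 ≤ b ∧ b ≤ a then (a.toNat.choose b.toNat : ℤ) else 0

/-- `(i,j;k,l)` is a tree quartet: the (unique) path from `i` to `j` and the (unique) path
from `k` to `l` share no edges. -/
def IsQuartet {V : Type*} (G : SimpleGraph V) (i j k l : V) : Prop :=
  ∀ (p : G.Walk i j) (q : G.Walk k l), p.IsPath → q.IsPath →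
    ∀ e ∈ p.edges, e ∉ q.edges

def FourPointCondition {α : Type*} (d : α → α → ℝ) : Prop :=
  ∀ i j k l, d i j + d k l ≤ max (d i k + d j l) (d j k + d i l)

section FourPoint

variable {α : Type*} {s : Set α} {S : α → α → ℝ}

lemma four_point_of_pairwise_ne (hS_self : ∀ x ∈ s, S x x = 0)
    (hS_comm : ∀ x ∈ s, ∀ y ∈ s, S x y = S y x)
    (hS_tri : ∀ x ∈ s, ∀ y ∈ s, ∀ z ∈ s, S x z ≤ S x y + S y z)
    (hS : ∀ i ∈ s, ∀ j ∈ s, ∀ k ∈ s, ∀ l ∈ s, i ≠ j → k ≠ l → i ≠ k → i ≠ l → j ≠ k → j ≠ l →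
      S i j + S k l ≤ max (S i k + S j l) (S j k + S i l))
    {i j k l : α} (hi : i ∈ s) (hj : j ∈ s) (hk : k ∈ s) (hl : l ∈ s) :
    S i j + S k l ≤ max (S i k + S j l) (S j k + S i l) := by
  rcases eq_or_ne i j with rfl | hij
  · rw [hS_self i hi, max_self]
    linarith [hS_tri k hk i hi l hl, hS_comm k hk i hi]
  rcases eq_or_ne k l with rfl | hkl
  · refine le_max_of_le_left ?_
    linarith [hS_tri i hi k hk j hj, hS_comm k hk j hj, hS_self k hk]
  rcases eq_or_ne i k with rfl | hik
  · exact le_max_of_le_right (by rw [hS_comm j hj i hi])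
  rcases eq_or_ne i l with rfl | hil
  · exact le_max_of_le_left (by rw [hS_comm k hk i hi, hS_comm j hj i hi, add_comm])
  rcases eq_or_ne j k with rfl | hjk
  · exact le_max_left _ _
  rcases eq_or_ne j l with rfl | hjl
  · exact le_max_of_le_right (by rw [hS_comm k hk j hj, add_comm])
  exact hS i hi j hj k hk l hl hij hkl hik hil hjk hjl

variable {d : α → α → ℝ}

lemma FourPointCondition.dist_triangle (hd : FourPointCondition d)
    (hd_comm : ∀ x y, d x y = d y x) (hd_self : ∀ x, d x x = 0) (x y z : α) :
    d x z ≤ d x y + d y z := by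
  have := hd x z y y
  rw [hd_self, hd_comm z y, add_comm (d y z), max_self] at this
  linarith

/-- Attaching pendant edges of lengths `φ x ≥ 0` to the points of a tree metric `d` keeps the
four-point condition. -/
lemma FourPointCondition.of_eq_add_add (hd : FourPointCondition d)
    (hd_comm : ∀ x y, d x y = d y x) (hd_self : ∀ x, d x x = 0) {φ : α → ℝ} (hφ : ∀ x, 0 ≤ φ x)
    (hS_self : ∀ x ∈ s, S x x = 0)
    (hS : ∀ x ∈ s, ∀ y ∈ s, x ≠ y → S x y = φ x + φ y + d x y)
    {i j k l : α} (hi : i ∈ s) (hj : j ∈ s) (hk : k ∈ s) (hl : l ∈ s) :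
    S i j + S k l ≤ max (S i k + S j l) (S j k + S i l) := by
  have hd_tri := hd.dist_triangle hd_comm hd_self
  have hS_nonneg : ∀ x ∈ s, ∀ y ∈ s, 0 ≤ S x y := by
    intro x hx y hy
    rcases eq_or_ne x y with rfl | hxy
    · exact (hS_self x hx).ge
    · linarith [hS x hx y hy hxy, hd_tri x y x, hd_self x, hd_comm x y, hφ x, hφ y]
  refine four_point_of_pairwise_ne hS_self (fun x hx y hy => ?_) (fun x hx y hy z hz => ?_)
    (fun i hi j hj k hk l hl hij hkl hik hil hjk hjl => ?_) hi hj hk hl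
  · rcases eq_or_ne x y with rfl | hxy
    · rfl
    · rw [hS x hx y hy hxy, hS y hy x hx hxy.symm, hd_comm y x, add_comm (φ y)]
  · rcases eq_or_ne x z with rfl | hxz
    · rw [hS_self x hx]
      exact add_nonneg (hS_nonneg x hx y hy) (hS_nonneg y hy x hx)
    rcases eq_or_ne x y with rfl | hxy
    · rw [hS_self x hx, zero_add]
    rcases eq_or_ne y z with rfl | hyz
    · rw [hS_self y hy, add_zero]
    rw [hS x hx z hz hxz, hS x hx y hy hxy, hS y hy z hz hyz]
    linarith [hd_tri x y z, hφ y]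
  · rw [hS i hi j hj hij, hS k hk l hl hkl, hS i hi k hk hik, hS j hj l hl hjl,
      hS j hj k hk hjk, hS i hi l hl hil]
    rcases le_max_iff.mp (hd i j k l) with h | h
    · exact le_max_of_le_left (by linarith)
    · exact le_max_of_le_right (by linarith)

end FourPoint

namespace SimpleGraph

variable {V : Type*} {G : SimpleGraph V}

lemma Reachable.deleteEdges_left_or_right {u v z : V} (h : G.Reachable z u) :
    (G.deleteEdges {s(u, v)}).Reachable z u ∨ (G.deleteEdges {s(u, v)}).Reachable z v := by
  rw [reachable_iff_reflTransGen] at h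
  induction h using Relation.ReflTransGen.head_induction_on with
  | refl => exact .inl .rfl
  | @head z z' hzz' _ ih =>
    by_cases he : s(z, z') = s(u, v)
    · rcases Sym2.eq_iff.mp he with ⟨rfl, -⟩ | ⟨rfl, -⟩
      · exact .inl .rfl
      · exact .inr .rfl
    · have hadj : (G.deleteEdges {s(u, v)}).Adj z z' := by simp [hzz', he]
      exact ih.imp hadj.reachable.trans hadj.reachable.trans

lemma IsTree.reachable_deleteEdges_iff (hT : G.IsTree) {u v : V} (huv : G.Adj u v) (x y : V) :
    (G.deleteEdges {s(u, v)}).Reachable x y ↔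
      ((G.deleteEdges {s(u, v)}).Reachable x u ↔ (G.deleteEdges {s(u, v)}).Reachable y u) := by
  have hbridge : ¬ (G.deleteEdges {s(u, v)}).Reachable u v :=
    isAcyclic_iff_forall_adj_isBridge.mp hT.isAcyclic huv
  have hx := (hT.connected.preconnected x u).deleteEdges_left_or_right (v := v)
  have hy := (hT.connected.preconnected y u).deleteEdges_left_or_right (v := v)
  constructor
  · intro hxy
    exact ⟨hxy.symm.trans, hxy.trans⟩
  · intro h
    rcases hx with hxu | hxv
    · exact hxu.trans (h.mp hxu).symm
    · have hyu : ¬ (G.deleteEdges {s(u, v)}).Reachable y u := fun hyu =>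
        hbridge ((h.mpr hyu).symm.trans hxv)
      exact hxv.trans (hy.resolve_left hyu).symm

lemma IsTree.reachable_deleteEdges_or (hT : G.IsTree) {e : Sym2 V} (he : e ∈ G.edgeSet)
    {p q : V} (hpq : ¬ (G.deleteEdges {e}).Reachable p q) (z : V) :
    (G.deleteEdges {e}).Reachable z p ∨ (G.deleteEdges {e}).Reachable z q := by
  induction e using Sym2.ind with | h u v =>
  have hsides := hT.reachable_deleteEdges_iff he
  rw [hsides p q] at hpq
  rw [hsides z p, hsides z q]
  tauto

lemma Reachable.deleteEdges_of_not_reachable {e : Sym2 V} {x y v : V}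
    (hxy : (G.deleteEdges {e}).Reachable x y) (hxv : ¬ (G.deleteEdges {e}).Reachable x v)
    (v' : V) : (G.deleteEdges {s(v, v')}).Reachable x y := by
  classical
  obtain ⟨p⟩ := hxy
  have hp : s(v, v') ∉ p.edges := fun h =>
    hxv ⟨p.takeUntil v (p.fst_mem_support_of_mem_edges h)⟩
  exact (p.toDeleteEdge _ hp).reachable.mono (deleteEdges_mono (G.deleteEdges_le _))

def SeparatesPairs (G : SimpleGraph V) (e : Sym2 V) (a b c d : V) : Prop :=
  (G.deleteEdges {e}).Reachable a b ∧ (G.deleteEdges {e}).Reachable c d ∧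
    ¬ (G.deleteEdges {e}).Reachable a c

lemma IsTree.not_separatesPairs_of_separatesPairs (hT : G.IsTree) {e : Sym2 V}
    (he : e ∈ G.edgeSet) {i j k l : V} (hsep : G.SeparatesPairs e i k j l) (f : Sym2 V) :
    ¬ G.SeparatesPairs f i l j k := by
  induction f using Sym2.ind with | h v v' =>
  rintro ⟨hil, hjk, hij⟩
  obtain ⟨hik, hjl, hij'⟩ := hsep
  rcases hT.reachable_deleteEdges_or he hij' v with hvi | hvj
  · have hjv : ¬ (G.deleteEdges {e}).Reachable j v := fun hjv => hij' (hjv.trans hvi).symm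
    exact hij (hil.trans (hjl.deleteEdges_of_not_reachable hjv v').symm)
  · have hiv : ¬ (G.deleteEdges {e}).Reachable i v := fun hiv => hij' (hiv.trans hvj)
    exact hij ((hik.deleteEdges_of_not_reachable hiv v').trans hjk.symm)

variable [Fintype V]

/-- The path-length metric of a tree with edge weights `w`, written as a sum of split metrics. -/
def splitDist (G : SimpleGraph V) (w : Sym2 V → ℝ) (x y : V) : ℝ :=
  ∑ e ∈ G.edgeFinset, if (G.deleteEdges {e}).Reachable x y then 0 else w e

lemma splitDist_self (w : Sym2 V → ℝ) (x : V) : G.splitDist w x x = 0 := by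
  simp [splitDist]

lemma splitDist_comm (w : Sym2 V → ℝ) (x y : V) : G.splitDist w x y = G.splitDist w y x := by
  simp only [splitDist, reachable_comm]

lemma IsTree.ite_reachable_add_le (hT : G.IsTree) {e : Sym2 V} (he : e ∈ G.edgeSet) {r : ℝ}
    (hr : 0 ≤ r) {i j k l : V} (h : ¬ G.SeparatesPairs e i k j l) :
    (if (G.deleteEdges {e}).Reachable i j then 0 else r) +
        (if (G.deleteEdges {e}).Reachable k l then 0 else r) ≤
      (if (G.deleteEdges {e}).Reachable i k then 0 else r) +
        (if (G.deleteEdges {e}).Reachable j l then 0 else r) := by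
  induction e using Sym2.ind with | h u v =>
  have hsides := hT.reachable_deleteEdges_iff (u := u) (v := v) he
  rw [SeparatesPairs, hsides i k, hsides j l, hsides i j] at h
  simp only [hsides i j, hsides k l, hsides i k, hsides j l]
  split_ifs <;> first | linarith | tauto

lemma IsTree.fourPointCondition_splitDist (hT : G.IsTree) {w : Sym2 V → ℝ}
    (hw : ∀ e ∈ G.edgeSet, 0 ≤ w e) : FourPointCondition (G.splitDist w) := by
  intro i j k l
  simp only [splitDist, ← Finset.sum_add_distrib]
  by_cases hsep : ∃ e ∈ G.edgeSet, G.SeparatesPairs e i k j l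
  · obtain ⟨e, he, hsep⟩ := hsep
    refine le_max_of_le_right (Finset.sum_le_sum fun f hf => ?_)
    rw [mem_edgeFinset] at hf
    have := hT.ite_reachable_add_le hf (hw f hf) (hT.not_separatesPairs_of_separatesPairs he hsep f)
    simp only [reachable_comm (u := l)] at this
    linarith
  · refine le_max_of_le_left (Finset.sum_le_sum fun f hf => ?_)
    rw [mem_edgeFinset] at hf
    exact hT.ite_reachable_add_le hf (hw f hf) fun h => hsep ⟨f, hf, h⟩

end SimpleGraph

lemma Finset.card_powersetCard_erase_erase {α : Type*} [DecidableEq α] {s : Finset α} {a b : α}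
    (ha : a ∈ s) (hb : b ∈ s) (hab : a ≠ b) (n : ℕ) :
    #(((s.erase a).erase b).powersetCard n) = (#s - 2).choose n := by
  rw [card_powersetCard, card_erase_of_mem (mem_erase.mpr ⟨hab.symm, hb⟩), card_erase_of_mem ha,
    Nat.sub_sub]

section SubtreeWeight

variable {V : Type*} {G : SimpleGraph V}

lemma SimpleGraph.IsTree.onPath_iff (hT : G.IsTree) {e : Sym2 V} (he : e ∈ G.edgeSet) {a b : V} :
    OnPath G a b e ↔ ¬ (G.deleteEdges {e}).Reachable a b := by
  constructor
  · rintro ⟨p, hp, hep⟩ hab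
    induction e using Sym2.ind with | h u v =>
    obtain ⟨q, hq⟩ := reachable_deleteEdges_iff_exists_walk.mp hab
    have hpq : p = q.bypass :=
      congrArg Subtype.val ((hT.isAcyclic.subsingleton_path a b).elim ⟨p, hp⟩ ⟨_, q.bypass_isPath⟩)
    exact hq (q.edges_bypass_subset_edges (hpq ▸ hep))
  · intro hab
    obtain ⟨p, hp⟩ := hT.connected.preconnected.exists_isPath a b
    exact ⟨p, hp, p.mem_edges_of_not_reachable_deleteEdges hab⟩

variable [Fintype V]

lemma subtreeEdges_subset (G : SimpleGraph V) (R : Finset V) : subtreeEdges G R ⊆ G.edgeFinset :=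
  filter_subset _ _

lemma SimpleGraph.IsTree.mem_subtreeEdges_iff (hT : G.IsTree) {R : Finset V} {x : V} (hx : x ∈ R)
    {e : Sym2 V} :
    e ∈ subtreeEdges G R ↔ e ∈ G.edgeSet ∧ ∃ b ∈ R, ¬ (G.deleteEdges {e}).Reachable x b := by
  rw [subtreeEdges, mem_filter, mem_edgeFinset]
  refine and_congr_right fun he => ?_
  simp only [hT.onPath_iff he]
  constructor
  · rintro ⟨a, ha, b, hb, hab⟩
    by_contra! h
    exact hab ((h a ha).symm.trans (h b hb))
  · rintro ⟨b, hb, hxb⟩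
    exact ⟨x, hx, b, hb, hxb⟩

def leafSideChoose (G : SimpleGraph V) (X : Finset V) (m : ℕ) (x : V) (e : Sym2 V) : ℕ :=
  (#(leafSide G X x e) - 2).choose (m - 2)

variable {X : Finset V} {m : ℕ} {x y : V} {e : Sym2 V}

lemma SimpleGraph.IsTree.filter_notMem_subtreeEdges (hT : G.IsTree)
    (he : e ∈ G.edgeSet) :
    {Y ∈ ((X.erase x).erase y).powersetCard (m - 2) |
        e ∉ subtreeEdges G (insert x (insert y Y))} =
      if (G.deleteEdges {e}).Reachable x y then
        ((((leafSide G X x e).erase x).erase y).powersetCard (m - 2)) else ∅ := by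
  ext Y
  simp only [mem_filter, mem_powersetCard, hT.mem_subtreeEdges_iff (mem_insert_self x _), he,
    true_and, not_exists, not_and, not_not]
  split_ifs with hxy'
  · simp only [mem_powersetCard, forall_mem_insert, subset_iff, mem_erase, leafSide, mem_filter]
    grind [Reachable.refl]
  · simp only [forall_mem_insert, notMem_empty, iff_false]
    tauto

lemma SimpleGraph.IsTree.card_filter_notMem_subtreeEdges (hT : G.IsTree) (hx : x ∈ X) (hy : y ∈ X)
    (hxy : x ≠ y) (he : e ∈ G.edgeSet) :
    #{Y ∈ ((X.erase x).erase y).powersetCard (m - 2) |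
        e ∉ subtreeEdges G (insert x (insert y Y))} =
      if (G.deleteEdges {e}).Reachable x y then leafSideChoose G X m x e else 0 := by
  rw [hT.filter_notMem_subtreeEdges he]
  split_ifs with hxy'
  · have hxL : x ∈ leafSide G X x e := mem_filter.mpr ⟨hx, .rfl⟩
    have hyL : y ∈ (leafSide G X x e).erase x :=
      mem_erase.mpr ⟨hxy.symm, mem_filter.mpr ⟨hy, hxy'⟩⟩
    rw [card_powersetCard, card_erase_of_mem hyL, card_erase_of_mem hxL, Nat.sub_sub,
      leafSideChoose]
  · rfl

lemma SimpleGraph.IsTree.SDmap_eq_sum (hT : G.IsTree) (w : Sym2 V → ℝ) (hx : x ∈ X) (hy : y ∈ X)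
    (hxy : x ≠ y) :
    SDmap G w X m x y = ∑ e ∈ G.edgeFinset, w e * (((#X - 2).choose (m - 2) : ℕ) -
      ((if (G.deleteEdges {e}).Reachable x y then leafSideChoose G X m x e else 0 : ℕ) : ℝ)) := by
  set P := ((X.erase x).erase y).powersetCard (m - 2)
  have hcount : ∀ e ∈ G.edgeFinset, (#{Y ∈ P | e ∈ subtreeEdges G (insert x (insert y Y))} : ℝ) =
      ((#X - 2).choose (m - 2) : ℕ) -
        ((if (G.deleteEdges {e}).Reachable x y then leafSideChoose G X m x e else 0 : ℕ) : ℝ) := by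
    intro e he
    have hsplit := card_filter_add_card_filter_not (s := P)
      (fun Y => e ∈ subtreeEdges G (insert x (insert y Y)))
    rw [hT.card_filter_notMem_subtreeEdges hx hy hxy (mem_edgeFinset.mp he),
      card_powersetCard_erase_erase hx hy hxy] at hsplit
    exact eq_sub_of_add_eq (mod_cast hsplit)
  calc SDmap G w X m x y
      = ∑ Y ∈ P, ∑ e ∈ G.edgeFinset,
          if e ∈ subtreeEdges G (insert x (insert y Y)) then w e else 0 := by
        refine sum_congr rfl fun Y _ => ?_
        rw [subtreeWeight, sum_ite_mem, inter_eq_right.mpr (subtreeEdges_subset G _)]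
    _ = ∑ e ∈ G.edgeFinset, #{Y ∈ P | e ∈ subtreeEdges G (insert x (insert y Y))} * w e := by
        rw [sum_comm]
        refine sum_congr rfl fun e _ => ?_
        rw [← sum_filter, sum_const, nsmul_eq_mul]
    _ = _ := sum_congr rfl fun e he => by rw [hcount e he, mul_comm]

end SubtreeWeight

section Decomposition

variable {V : Type*} [Fintype V] {G : SimpleGraph V} {X : Finset V} {m : ℕ} {x y : V}
  {e : Sym2 V}

lemma leafSideChoose_le : leafSideChoose G X m x e ≤ (#X - 2).choose (m - 2) :=
  Nat.choose_le_choose _ (Nat.sub_le_sub_right (card_le_card (filter_subset _ _)) 2)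

lemma leafSideChoose_eq_of_reachable (h : (G.deleteEdges {e}).Reachable x y) :
    leafSideChoose G X m x e = leafSideChoose G X m y e := by
  have hside : leafSide G X x e = leafSide G X y e :=
    filter_congr fun z _ => ⟨h.symm.trans, h.trans⟩
  rw [leafSideChoose, leafSideChoose, hside]

/-- `(C(|A| - 2, m - 2) + C(|B| - 2, m - 2)) / 2` for the leaf sets `A`, `B` on the two sides
of `e`. -/
def splitCoeff (G : SimpleGraph V) (X : Finset V) (m : ℕ) (e : Sym2 V) : ℝ :=
  Sym2.lift ⟨fun u v => ((leafSideChoose G X m u e + leafSideChoose G X m v e : ℕ) : ℝ) / 2,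
    fun u v => by simp only [add_comm]⟩ e

lemma splitCoeff_nonneg : 0 ≤ splitCoeff G X m e := by
  induction e using Sym2.ind with | h u v =>
  simp only [splitCoeff, Sym2.lift_mk]
  positivity

lemma SimpleGraph.IsTree.leafSideChoose_add_of_not_reachable (hT : G.IsTree)
    (he : e ∈ G.edgeSet) (hxy : ¬ (G.deleteEdges {e}).Reachable x y) :
    (leafSideChoose G X m x e + leafSideChoose G X m y e : ℝ) = 2 * splitCoeff G X m e := by
  induction e using Sym2.ind with | h u v =>
  have huv : ¬ (G.deleteEdges {s(u, v)}).Reachable u v :=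
    isAcyclic_iff_forall_adj_isBridge.mp hT.isAcyclic he
  simp only [splitCoeff, Sym2.lift_mk, Nat.cast_add]
  rcases hT.reachable_deleteEdges_or he hxy u with hux | huy
  · have hvy := (hT.reachable_deleteEdges_or he hxy v).resolve_left
      fun hvx => huv (hux.trans hvx.symm)
    rw [leafSideChoose_eq_of_reachable hux, leafSideChoose_eq_of_reachable hvy]
    ring
  · have hvx := (hT.reachable_deleteEdges_or he hxy v).resolve_right
      fun hvy => huv (huy.trans hvy.symm)
    rw [leafSideChoose_eq_of_reachable huy, leafSideChoose_eq_of_reachable hvx]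
    ring

def leafOffset (G : SimpleGraph V) (X : Finset V) (w : Sym2 V → ℝ) (m : ℕ) (x : V) : ℝ :=
  ∑ e ∈ G.edgeFinset,
    w e * ((((#X - 2).choose (m - 2) : ℕ) : ℝ) - leafSideChoose G X m x e) / 2

lemma leafOffset_nonneg {w : Sym2 V → ℝ} (hw : ∀ e ∈ G.edgeSet, 0 ≤ w e) (x : V) :
    0 ≤ leafOffset G X w m x := by
  refine sum_nonneg fun e he => div_nonneg (mul_nonneg (hw e (mem_edgeFinset.mp he)) ?_) two_pos.le
  exact sub_nonneg.mpr (mod_cast leafSideChoose_le)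

theorem SimpleGraph.IsTree.SDmap_eq_leafOffset_add_splitDist (hT : G.IsTree) (w : Sym2 V → ℝ)
    (hx : x ∈ X) (hy : y ∈ X) (hxy : x ≠ y) :
    SDmap G w X m x y = leafOffset G X w m x + leafOffset G X w m y +
      G.splitDist (fun e => w e * splitCoeff G X m e) x y := by
  rw [hT.SDmap_eq_sum w hx hy hxy, leafOffset, leafOffset, splitDist, ← sum_add_distrib,
    ← sum_add_distrib]
  refine sum_congr rfl fun e he => ?_
  split_ifs with hxy'
  · rw [leafSideChoose_eq_of_reachable hxy']
    ring
  · have := hT.leafSideChoose_add_of_not_reachable (X := X) (m := m) (mem_edgeFinset.mp he) hxy'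
    push_cast
    linear_combination (w e / 2) * this

end Decomposition

theorem SD_four_point_condition_general
    {V : Type*} [Fintype V] (G : SimpleGraph V) (X : Finset V)
    (hT : G.IsTree)
    (w : Sym2 V → ℝ) (hw : ∀ e ∈ G.edgeSet, 0 < w e)
    (m : ℕ)
    -- `S` is `S_D`, extended by `S(i,i) = 0`
    (S : V → V → ℝ)
    (hS : ∀ i j : V, S i j = if i = j then 0 else SDmap G w X m i j)
    (i j k l : V) (hi : i ∈ X) (hj : j ∈ X) (hk : k ∈ X) (hl : l ∈ X) :
    S i j + S k l ≤ max (S i k + S j l) (S j k + S i l) := by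
  have hw₀ : ∀ e ∈ G.edgeSet, 0 ≤ w e := fun e he => (hw e he).le
  have hd : FourPointCondition (G.splitDist fun e => w e * splitCoeff G X m e) :=
    hT.fourPointCondition_splitDist fun e he => mul_nonneg (hw₀ e he) splitCoeff_nonneg
  refine hd.of_eq_add_add (splitDist_comm _) (splitDist_self _)
    (leafOffset_nonneg (X := X) (m := m) hw₀) (fun x _ => by rw [hS, if_pos rfl]) (fun x hx y hy hxy => ?_) hi hj hk hl
  rw [hS, if_neg hxy, hT.SDmap_eq_leafOffset_add_splitDist w hx hy hxy]

/-- `S_D` (with `S_D(i,i) = 0`) satisfies the four-point condition,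
i.e. it is a tree metric. -/
theorem SD_four_point_condition
    {V : Type*} [Fintype V] (G : SimpleGraph V) (X : Finset V)
    (hT : G.IsTree)
    (hleaf : ∀ v : V, G.degree v = 1 ↔ v ∈ X)
    (hint : ∀ v : V, v ∉ X → 3 ≤ G.degree v)
    (w : Sym2 V → ℝ) (hw : ∀ e ∈ G.edgeSet, 0 < w e)
    (m : ℕ) (hm : 2 ≤ m) (hmn : m ≤ X.card)
    -- `S` is `S_D`, extended by `S(i,i) = 0`
    (S : V → V → ℝ)
    (hS : ∀ i j : V, S i j = if i = j then 0 else SDmap G w X m i j)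
    (i j k l : V) (hi : i ∈ X) (hj : j ∈ X) (hk : k ∈ X) (hl : l ∈ X) :
    S i j + S k l ≤ max (S i k + S j l) (S j k + S i l) :=
  SD_four_point_condition_general G X hT w hw m S hS i j k l hi hj hk hl
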